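/- Let c_k be defined by: c_k = 2√(2π)·S(k)/(k+2)!! for odd k ≥ 3 (with S(k) = 1 + Σ_{j=0}^{(k−1)/2−1} (1/(2^{2j+1}(2j+3)))·C(2j+1,j) − ((k+1)/(2^k(k+2)))·C(k,(k−1)/2)) and c_k = −π²/(k+2)!! for even k ≥ 4. Then for every x > 0, c_k > 0 for odd k ≥ 3 and c_k < 0 for even k ≥ 4, i.e. the sequence (c_k x^k) is alternating in sign. -/

import Mathlib

open Real

noncomputable def Spaper (k : ℕ) : ℝ :=
  1 + (∑ j ∈ Finset.range ((k - 1) / 2),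
        1 / (2 ^ (2 * j + 1) * (2 * j + 3) : ℝ) * ((2 * j + 1).choose j : ℝ))
    - (k + 1) / (2 ^ k * (k + 2) : ℝ) * (k.choose ((k - 1) / 2) : ℝ)

open Real Nat in
noncomputable def cseq (k : ℕ) : ℝ :=
  if Odd k then 2 * Real.sqrt (2 * π) * Spaper k / ((k + 2)‼ : ℝ)
  else -π ^ 2 / ((k + 2)‼ : ℝ)

/- The subtracted term of `Spaper (2n+1)` is below `1`: bound the central binomial
coefficient by `4 ^ n`. -/
lemma succ_mul_choose_lt (n : ℕ) :
    (2 * n + 2) * (2 * n + 1).choose n < 2 ^ (2 * n + 1) * (2 * n + 3) := by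
  have hchoose : (2 * n + 1).choose n ≤ 2 ^ (2 * n) := by
    simpa [pow_mul] using Nat.choose_middle_le_pow n
  calc (2 * n + 2) * (2 * n + 1).choose n
      ≤ (2 * n + 2) * 2 ^ (2 * n) := Nat.mul_le_mul_left _ hchoose
    _ < (2 * n + 3) * 2 ^ (2 * n + 1) := by
      rw [pow_succ]; nlinarith [Nat.one_le_two_pow (n := 2 * n)]
    _ = 2 ^ (2 * n + 1) * (2 * n + 3) := mul_comm _ _

lemma Spaper_pos {k : ℕ} (hk : Odd k) : 0 < Spaper k := by
  obtain ⟨n, rfl⟩ := hk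
  have hsum : 0 ≤ ∑ j ∈ Finset.range ((2 * n + 1 - 1) / 2),
      1 / (2 ^ (2 * j + 1) * (2 * j + 3) : ℝ) * ((2 * j + 1).choose j : ℝ) :=
    Finset.sum_nonneg fun j _ => by positivity
  have hterm : ((2 * n + 1 : ℕ) + 1 : ℝ) / (2 ^ (2 * n + 1) * ((2 * n + 1 : ℕ) + 2))
      * ((2 * n + 1).choose ((2 * n + 1 - 1) / 2) : ℝ) < 1 := by
    rw [show (2 * n + 1 - 1) / 2 = n by omega, div_mul_eq_mul_div, div_lt_one (by positivity)]
    exact_mod_cast (by simpa [add_assoc] using succ_mul_choose_lt n)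
  unfold Spaper
  linarith

lemma cseq_pos_of_odd {k : ℕ} (hk : Odd k) : 0 < cseq k := by
  rw [cseq, if_pos hk]
  have := Spaper_pos hk
  have : 0 < Real.sqrt (2 * π) := Real.sqrt_pos.mpr (by positivity)
  positivity

lemma cseq_neg_of_even {k : ℕ} (hk : Even k) : cseq k < 0 := by
  rw [cseq, if_neg (Nat.not_odd_iff_even.mpr hk), neg_div]
  exact neg_neg_of_pos (by positivity)

theorem cseq_alternating (x : ℝ) (hx : 0 < x) (k : ℕ) :
    (Odd k → 3 ≤ k → cseq k * x ^ k > 0) ∧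
      (Even k → 4 ≤ k → cseq k * x ^ k < 0) :=
  ⟨fun hk _ => mul_pos (cseq_pos_of_odd hk) (pow_pos hx k),
    fun hk _ => mul_neg_of_neg_of_pos (cseq_neg_of_even hk) (pow_pos hx k)⟩
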